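/- Define G(t) = (1/2)·log(1/4 + t²) − 1/(4(1/4 + t²)) − (1/4 − t²)/(12(1/4 + t²)²) − √3·(arctan(2t) − 2t/(4t² + 1))/(72t³) − 2π·e^{−πt} − log(2π). Then G is increasing on [6, ∞) and G(6.29072) < 0 < G(6.29073). -/
import Mathlib


noncomputable def G (t : ℝ) : ℝ :=
  (1/2) * Real.log (1/4 + t ^ 2) - 1 / (4 * (1/4 + t ^ 2))
    - (1/4 - t ^ 2) / (12 * (1/4 + t ^ 2) ^ 2)
    - Real.sqrt 3 * (Real.arctan (2 * t) - 2 * t / (4 * t ^ 2 + 1)) / (72 * t ^ 3)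
    - 2 * Real.pi * Real.exp (-Real.pi * t) - Real.log (2 * Real.pi)

open Real

/-- Taylor bounds for `exp` on `[0,1]`. -/
lemma exp_taylor13 {x : ℝ} (h0 : 0 ≤ x) (h1 : x ≤ 1) :
    1 + x + x^2/2 + x^3/6 + x^4/24 + x^5/120 + x^6/720 + x^7/5040 + x^8/40320
      + x^9/362880 + x^10/3628800 + x^11/39916800 + x^12/479001600
      - x^13 * (14/80951270400) ≤ Real.exp x ∧
    Real.exp x ≤ 1 + x + x^2/2 + x^3/6 + x^4/24 + x^5/120 + x^6/720 + x^7/5040 + x^8/40320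
      + x^9/362880 + x^10/3628800 + x^11/39916800 + x^12/479001600
      + x^13 * (14/80951270400) := by
  have h := Real.exp_bound (x := x) (by rw [abs_of_nonneg h0]; exact h1) (n := 13) (by norm_num)
  rw [abs_of_nonneg h0] at h
  have hs : (∑ m ∈ Finset.range 13, x ^ m / m.factorial)
      = 1 + x + x^2/2 + x^3/6 + x^4/24 + x^5/120 + x^6/720 + x^7/5040 + x^8/40320
      + x^9/362880 + x^10/3628800 + x^11/39916800 + x^12/479001600 := by
    norm_num [Finset.sum_range_succ, Nat.factorial]
  have he : x ^ 13 * ((Nat.succ 13) / ((Nat.factorial 13) * 13) : ℝ) = x ^ 13 * (14/80951270400) := by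
    norm_num [Nat.factorial]
  rw [hs] at h
  have h2 := abs_sub_le_iff.1 h
  constructor
  · nlinarith [h2.1, h2.2]
  · nlinarith [h2.1, h2.2]

/-- Upper bound for `arctan` via `tan`. -/
lemma arctan_lt_of {z c : ℝ} (hz : 0 ≤ z) (hc0 : 0 < c) (hc1 : c ≤ 1)
    (h : z * (1 - c^2/2 + c^4*(5/96)) < c - c^3/6 - c^4*(5/96)) : Real.arctan z < c := by
  have hca : |c| ≤ 1 := by rw [abs_of_nonneg hc0.le]; exact hc1
  have hc2 : c^2 ≤ 1 := by nlinarith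
  have hc4 : c^4 ≤ 1 := by nlinarith
  have hcos := Real.cos_bound hca
  have hsin := Real.sin_bound hca
  rw [abs_of_nonneg hc0.le] at hcos hsin
  have hcos2 := abs_sub_le_iff.1 hcos
  have hsin2 := abs_sub_le_iff.1 hsin
  have hcpos : 0 < Real.cos c := by nlinarith [hcos2.2]
  have htan : z < Real.tan c := by
    rw [Real.tan_eq_sin_div_cos, lt_div_iff₀ hcpos]
    nlinarith [hcos2.2, hsin2.2]
  have h2 : Real.arctan z < Real.arctan (Real.tan c) := Real.arctan_strictMono htan
  rwa [Real.arctan_tan (by nlinarith [Real.pi_gt_three]) (by nlinarith [Real.pi_gt_three])] at h2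

/-- Lower bound for `arctan` via `tan`. -/
lemma lt_arctan_of {z c : ℝ} (hc0 : 0 < c) (hc1 : c ≤ 1)
    (h : c - c^3/6 + c^4*(5/96) < z * (1 - c^2/2 - c^4*(5/96))) : c < Real.arctan z := by
  have hca : |c| ≤ 1 := by rw [abs_of_nonneg hc0.le]; exact hc1
  have hc2 : c^2 ≤ 1 := by nlinarith
  have hc3 : c^3 ≤ c := by nlinarith
  have hc4 : c^4 ≤ 1 := by nlinarith
  have hcos := Real.cos_bound hca
  have hsin := Real.sin_bound hca
  rw [abs_of_nonneg hc0.le] at hcos hsin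
  have hcos2 := abs_sub_le_iff.1 hcos
  have hsin2 := abs_sub_le_iff.1 hsin
  have hcpos : 0 < Real.cos c := by nlinarith [hcos2.2]
  have hClo : 0 < 1 - c^2/2 - c^4*(5/96) := by nlinarith
  have hlhs : 0 < c - c^3/6 + c^4*(5/96) := by nlinarith
  have hz : 0 < z := by
    by_contra hzn
    push_neg at hzn
    nlinarith [mul_nonneg (neg_nonneg.2 hzn) hClo.le]
  have htan : Real.tan c < z := by
    rw [Real.tan_eq_sin_div_cos, div_lt_iff₀ hcpos]
    nlinarith [hcos2.1, hsin2.1]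
  have h2 : Real.arctan (Real.tan c) < Real.arctan z := Real.arctan_strictMono htan
  rwa [Real.arctan_tan (by nlinarith [Real.pi_gt_three]) (by nlinarith [Real.pi_gt_three])] at h2

lemma G_hasDeriv {t : ℝ} (ht : 0 < t) :
    HasDerivAt G
      (t * (6*(1/4+t^2)^2 + 2*(1/4+t^2) + 1) / (6*(1/4+t^2)^3)
        + Real.sqrt 3 * (3*(Real.arctan (2*t) - 2*t/(4*t^2+1)) - 16*t^3/(4*t^2+1)^2) / (72*t^4)
        + 2*Real.pi^2*Real.exp (-Real.pi*t)) t := by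
  have hu : (0:ℝ) < 1/4 + t^2 := by positivity
  have h1 : HasDerivAt (fun s : ℝ => 1/4 + s^2) (2*t) t := by
    simpa using (hasDerivAt_pow 2 t).const_add (1/4 : ℝ)
  have hA : HasDerivAt (fun s : ℝ => (1/2) * Real.log (1/4 + s^2)) ((1/2) * (2*t / (1/4+t^2))) t :=
    (h1.log hu.ne').const_mul (1/2)
  have hB : HasDerivAt (fun s : ℝ => 1 / (4*(1/4+s^2)))
      ((0 * (4*(1/4+t^2)) - 1 * (4*(2*t))) / (4*(1/4+t^2))^2) t :=
    (hasDerivAt_const t (1:ℝ)).div (h1.const_mul 4) (by positivity)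
  have hnum : HasDerivAt (fun s : ℝ => 1/4 - s^2) (-(2*t)) t := by
    simpa using ((hasDerivAt_pow 2 t).const_sub (1/4 : ℝ))
  have hden : HasDerivAt (fun s : ℝ => 12*(1/4+s^2)^2) (12*(2*(1/4+t^2)^1*(2*t))) t :=
    (h1.pow 2).const_mul 12
  have hC : HasDerivAt (fun s : ℝ => (1/4 - s^2) / (12*(1/4+s^2)^2))
      ((-(2*t) * (12*(1/4+t^2)^2) - (1/4-t^2) * (12*(2*(1/4+t^2)^1*(2*t)))) / (12*(1/4+t^2)^2)^2) t :=
    hnum.div hden (by positivity)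
  have h2t : HasDerivAt (fun s : ℝ => 2*s) (2:ℝ) t := by
    simpa using (hasDerivAt_id t).const_mul (2:ℝ)
  have harc : HasDerivAt (fun s : ℝ => Real.arctan (2*s)) ((1/(1+(2*t)^2)) * 2) t :=
    (Real.hasDerivAt_arctan (2*t)).comp t h2t
  have hq : HasDerivAt (fun s : ℝ => 4*s^2+1) (4*(2*t)) t := by
    simpa using ((hasDerivAt_pow 2 t).const_mul (4:ℝ)).add_const 1
  have hr : HasDerivAt (fun s : ℝ => 2*s/(4*s^2+1))
      ((2 * (4*t^2+1) - 2*t * (4*(2*t))) / (4*t^2+1)^2) t := h2t.div hq (by positivity)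
  have hfD : HasDerivAt (fun s : ℝ => Real.sqrt 3 * (Real.arctan (2*s) - 2*s/(4*s^2+1)))
      (Real.sqrt 3 * ((1/(1+(2*t)^2)) * 2 - (2 * (4*t^2+1) - 2*t * (4*(2*t))) / (4*t^2+1)^2)) t :=
    (harc.sub hr).const_mul _
  have hcb : HasDerivAt (fun s : ℝ => 72*s^3) (72*(3*t^2)) t := by
    simpa using (hasDerivAt_pow 3 t).const_mul (72:ℝ)
  have hD : HasDerivAt (fun s : ℝ => Real.sqrt 3 * (Real.arctan (2*s) - 2*s/(4*s^2+1)) / (72*s^3))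
      ((Real.sqrt 3 * ((1/(1+(2*t)^2)) * 2 - (2 * (4*t^2+1) - 2*t * (4*(2*t))) / (4*t^2+1)^2) * (72*t^3)
        - Real.sqrt 3 * (Real.arctan (2*t) - 2*t/(4*t^2+1)) * (72*(3*t^2))) / (72*t^3)^2) t :=
    hfD.div hcb (by positivity)
  have hexp : HasDerivAt (fun s : ℝ => 2*Real.pi*Real.exp (-Real.pi*s))
      (2*Real.pi*(Real.exp (-Real.pi*t) * (-Real.pi * 1))) t :=
    ((Real.hasDerivAt_exp (-Real.pi*t)).comp t ((hasDerivAt_id t).const_mul (-Real.pi))).const_mul _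
  have hG := ((((hA.sub hB).sub hC).sub hD).sub hexp).sub_const (Real.log (2*Real.pi))
  have hGG : HasDerivAt G ((1/2) * (2*t / (1/4+t^2))
      - (0 * (4*(1/4+t^2)) - 1 * (4*(2*t))) / (4*(1/4+t^2))^2
      - (-(2*t) * (12*(1/4+t^2)^2) - (1/4-t^2) * (12*(2*(1/4+t^2)^1*(2*t)))) / (12*(1/4+t^2)^2)^2
      - (Real.sqrt 3 * ((1/(1+(2*t)^2)) * 2 - (2 * (4*t^2+1) - 2*t * (4*(2*t))) / (4*t^2+1)^2) * (72*t^3)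
        - Real.sqrt 3 * (Real.arctan (2*t) - 2*t/(4*t^2+1)) * (72*(3*t^2))) / (72*t^3)^2
      - 2*Real.pi*(Real.exp (-Real.pi*t) * (-Real.pi * 1))) t := hG
  convert hGG using 1
  have ht' : t ≠ 0 := ht.ne'
  have hu' : (1/4 + t^2 : ℝ) ≠ 0 := hu.ne'
  have hq' : (4*t^2+1 : ℝ) ≠ 0 := by positivity
  have hq2 : (1+(2*t)^2 : ℝ) ≠ 0 := by positivity
  field_simp
  ring

lemma hlog_a : Real.log (1/4 + (6.29072:ℝ) ^ 2) < 3.6844487 := by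
  rw [Real.log_lt_iff_lt_exp (by positivity)]
  have h4 : Real.exp (3.6844487:ℝ) = Real.exp 0.921112175 ^ (4:ℕ) := by
    rw [← Real.exp_nat_mul]; norm_num
  have hlo := (exp_taylor13 (x := 0.921112175) (by norm_num) (by norm_num)).1
  have hL : (2.51208271234508:ℝ) ≤ Real.exp 0.921112175 := le_trans (by norm_num) hlo
  calc (1/4 + (6.29072:ℝ) ^ 2) < 2.51208271234508 ^ (4:ℕ) := by norm_num
    _ ≤ Real.exp 0.921112175 ^ (4:ℕ) := pow_le_pow_left₀ (by norm_num) hL 4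
    _ = Real.exp 3.6844487 := h4.symm

lemma hlog_b : (3.6844516:ℝ) < Real.log (1/4 + (6.29073:ℝ) ^ 2) := by
  rw [Real.lt_log_iff_exp_lt (by positivity)]
  have h4 : Real.exp (3.6844516:ℝ) = Real.exp 0.9211129 ^ (4:ℕ) := by
    rw [← Real.exp_nat_mul]; norm_num
  have hhi := (exp_taylor13 (x := 0.9211129) (by norm_num) (by norm_num)).2
  have hH : Real.exp 0.9211129 ≤ 2.51208453372456 := le_trans hhi (by norm_num)
  calc Real.exp (3.6844516:ℝ) = Real.exp 0.9211129 ^ (4:ℕ) := h4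
    _ ≤ (2.51208453372456:ℝ) ^ (4:ℕ) := pow_le_pow_left₀ (Real.exp_nonneg _) hH 4
    _ < 1/4 + (6.29073:ℝ) ^ 2 := by norm_num

lemma hlog2pi_lo : (1.8378770:ℝ) < Real.log (2 * Real.pi) := by
  rw [Real.lt_log_iff_exp_lt (by positivity)]
  have h4 : Real.exp (1.8378770:ℝ) = Real.exp 0.45946925 ^ (4:ℕ) := by
    rw [← Real.exp_nat_mul]; norm_num
  have hhi := (exp_taylor13 (x := 0.45946925) (by norm_num) (by norm_num)).2
  have hH : Real.exp 0.45946925 ≤ 1.58323346080079 := le_trans hhi (by norm_num)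
  have hπ := Real.pi_gt_d20
  calc Real.exp (1.8378770:ℝ) = Real.exp 0.45946925 ^ (4:ℕ) := h4
    _ ≤ (1.58323346080079:ℝ) ^ (4:ℕ) := pow_le_pow_left₀ (Real.exp_nonneg _) hH 4
    _ < 2 * Real.pi := by nlinarith

lemma hlog2pi_hi : Real.log (2 * Real.pi) < 1.8378771 := by
  rw [Real.log_lt_iff_lt_exp (by positivity)]
  have h4 : Real.exp (1.8378771:ℝ) = Real.exp 0.459469275 ^ (4:ℕ) := by
    rw [← Real.exp_nat_mul]; norm_num
  have hlo := (exp_taylor13 (x := 0.459469275) (by norm_num) (by norm_num)).1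
  have hL : (1.5832335003816:ℝ) ≤ Real.exp 0.459469275 := le_trans (by norm_num) hlo
  have hπ := Real.pi_lt_d20
  calc 2 * Real.pi < (1.5832335003816:ℝ) ^ (4:ℕ) := by nlinarith
    _ ≤ Real.exp 0.459469275 ^ (4:ℕ) := pow_le_pow_left₀ (by norm_num) hL 4
    _ = Real.exp 1.8378771 := h4.symm

lemma hs3_lo : (1.7320508:ℝ) ≤ Real.sqrt 3 := by
  nlinarith [Real.sq_sqrt (show (0:ℝ) ≤ 3 by norm_num), Real.sqrt_nonneg 3]

lemma hs3_hi : Real.sqrt 3 ≤ 1.7320509 := by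
  nlinarith [Real.sq_sqrt (show (0:ℝ) ≤ 3 by norm_num), Real.sqrt_nonneg 3]

lemma hexp_term_b : 2 * Real.pi * Real.exp (-Real.pi * 6.29073) ≤ 0.00000004 := by
  have hπ := Real.pi_gt_d20
  have hπ2 := Real.pi_lt_d20
  have h19 : Real.exp (-Real.pi * 6.29073) ≤ Real.exp (-19) := Real.exp_le_exp.mpr (by nlinarith)
  have h4 : Real.exp (19:ℝ) = Real.exp 1 ^ (19:ℕ) := by
    rw [← Real.exp_nat_mul]; norm_num
  have he1 : (2.7182818:ℝ) ^ (19:ℕ) ≤ Real.exp 1 ^ (19:ℕ) :=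
    pow_le_pow_left₀ (by norm_num) (by linarith [Real.exp_one_gt_d9]) 19
  have hinv : Real.exp (-19:ℝ) ≤ ((2.7182818:ℝ) ^ (19:ℕ))⁻¹ := by
    rw [Real.exp_neg, h4]
    exact inv_anti₀ (by positivity) he1
  have hv : Real.exp (-Real.pi * 6.29073) ≤ ((2.7182818:ℝ) ^ (19:ℕ))⁻¹ := le_trans h19 hinv
  nlinarith [Real.exp_pos (-Real.pi * 6.29073)]

lemma G_neg_a : G 6.29072 < 0 := by
  have e1 : Real.arctan (2 * (6.29072:ℝ)) = Real.pi/2 - Real.arctan ((12.58144:ℝ)⁻¹) := by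
    have h := Real.arctan_inv_of_pos (show (0:ℝ) < 12.58144 by norm_num)
    have h2 : (2:ℝ) * 6.29072 = 12.58144 := by norm_num
    rw [h2]; linarith
  have harc_a : Real.arctan ((12.58144:ℝ)⁻¹) < 0.0793180 :=
    arctan_lt_of (by positivity) (by norm_num) (by norm_num) (by norm_num)
  have hπ := Real.pi_gt_d20
  have hr : (2:ℝ) * 6.29072 / (4 * 6.29072 ^ 2 + 1) = 12.58144/159.2926324736 := by norm_num
  have hF : (1.4124951:ℝ) ≤ Real.pi/2 - Real.arctan ((12.58144:ℝ)⁻¹)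
      - 2 * 6.29072 / (4 * 6.29072 ^ 2 + 1) := by
    rw [hr]; nlinarith [harc_a]
  have hSF : (1.7320508:ℝ) * 1.4124951 ≤ Real.sqrt 3 * (Real.pi/2 - Real.arctan ((12.58144:ℝ)⁻¹)
      - 2 * 6.29072 / (4 * 6.29072 ^ 2 + 1)) :=
    mul_le_mul hs3_lo hF (by norm_num) (le_trans (by norm_num) hs3_lo)
  have hterm : (1.7320508:ℝ) * 1.4124951 / (72 * 6.29072 ^ 3)
      ≤ Real.sqrt 3 * (Real.pi/2 - Real.arctan ((12.58144:ℝ)⁻¹)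
        - 2 * 6.29072 / (4 * 6.29072 ^ 2 + 1)) / (72 * 6.29072 ^ 3) := by
    apply div_le_div_of_nonneg_right hSF (by norm_num)
  have hexp_pos : 0 < 2 * Real.pi * Real.exp (-Real.pi * 6.29072) := by positivity
  show (1/2) * Real.log (1/4 + (6.29072:ℝ) ^ 2) - 1 / (4 * (1/4 + (6.29072:ℝ) ^ 2))
    - (1/4 - (6.29072:ℝ) ^ 2) / (12 * (1/4 + (6.29072:ℝ) ^ 2) ^ 2)
    - Real.sqrt 3 * (Real.arctan (2 * 6.29072) - 2 * 6.29072 / (4 * (6.29072:ℝ) ^ 2 + 1)) / (72 * (6.29072:ℝ) ^ 3)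
    - 2 * Real.pi * Real.exp (-Real.pi * 6.29072) - Real.log (2 * Real.pi) < 0
  rw [e1]
  have h1 : (1/2) * Real.log (1/4 + (6.29072:ℝ) ^ 2) < (1/2) * 3.6844487 := by linarith [hlog_a]
  have h2 : (1:ℝ) / (4 * (1/4 + (6.29072:ℝ) ^ 2)) = 1/159.2926324736 := by norm_num
  have h3 : ((1:ℝ)/4 - (6.29072:ℝ) ^ 2) / (12 * (1/4 + (6.29072:ℝ) ^ 2) ^ 2)
      = -1250049531250000/604966706284747249 := by norm_num
  linarith [hterm, hexp_pos, hlog2pi_lo, h1]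

lemma G_pos_b : 0 < G 6.29073 := by
  have e1 : Real.arctan (2 * (6.29073:ℝ)) = Real.pi/2 - Real.arctan ((12.58146:ℝ)⁻¹) := by
    have h := Real.arctan_inv_of_pos (show (0:ℝ) < 12.58146 by norm_num)
    have h2 : (2:ℝ) * 6.29073 = 12.58146 := by norm_num
    rw [h2]; linarith
  have harc_b : (0.0793125:ℝ) < Real.arctan ((12.58146:ℝ)⁻¹) :=
    lt_arctan_of (by norm_num) (by norm_num) (by norm_num)
  have harc_b2 : Real.arctan ((12.58146:ℝ)⁻¹) < Real.pi/4 := by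
    have h := Real.arctan_strictMono (show ((12.58146:ℝ))⁻¹ < 1 by norm_num)
    rwa [Real.arctan_one] at h
  have hπ := Real.pi_lt_d20
  have hπ2 := Real.pi_gt_d20
  have hr : (2:ℝ) * 6.29073 / (4 * 6.29073 ^ 2 + 1) = 12.58146/159.2931357316 := by norm_num
  have hF : Real.pi/2 - Real.arctan ((12.58146:ℝ)⁻¹)
      - 2 * 6.29073 / (4 * 6.29073 ^ 2 + 1) ≤ 1.4125008 := by
    rw [hr]; nlinarith [harc_b]
  have hF0 : (0:ℝ) ≤ Real.pi/2 - Real.arctan ((12.58146:ℝ)⁻¹)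
      - 2 * 6.29073 / (4 * 6.29073 ^ 2 + 1) := by
    rw [hr]; nlinarith [harc_b2]
  have hSF : Real.sqrt 3 * (Real.pi/2 - Real.arctan ((12.58146:ℝ)⁻¹)
      - 2 * 6.29073 / (4 * 6.29073 ^ 2 + 1)) ≤ (1.7320509:ℝ) * 1.4125008 :=
    mul_le_mul hs3_hi hF hF0 (by norm_num)
  have hterm : Real.sqrt 3 * (Real.pi/2 - Real.arctan ((12.58146:ℝ)⁻¹)
        - 2 * 6.29073 / (4 * 6.29073 ^ 2 + 1)) / (72 * 6.29073 ^ 3)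
      ≤ (1.7320509:ℝ) * 1.4125008 / (72 * 6.29073 ^ 3) := by
    apply div_le_div_of_nonneg_right hSF (by norm_num)
  show 0 < (1/2) * Real.log (1/4 + (6.29073:ℝ) ^ 2) - 1 / (4 * (1/4 + (6.29073:ℝ) ^ 2))
    - (1/4 - (6.29073:ℝ) ^ 2) / (12 * (1/4 + (6.29073:ℝ) ^ 2) ^ 2)
    - Real.sqrt 3 * (Real.arctan (2 * 6.29073) - 2 * 6.29073 / (4 * (6.29073:ℝ) ^ 2 + 1)) / (72 * (6.29073:ℝ) ^ 3)
    - 2 * Real.pi * Real.exp (-Real.pi * 6.29073) - Real.log (2 * Real.pi)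
  rw [e1]
  have h1 : (1/2:ℝ) * 3.6844516 < (1/2) * Real.log (1/4 + (6.29073:ℝ) ^ 2) := by linarith [hlog_b]
  have h2 : (1:ℝ) / (4 * (1/4 + (6.29073:ℝ) ^ 2)) = 2500000000/398232839329 := by norm_num
  have h3 : ((1:ℝ)/4 - (6.29073:ℝ) ^ 2) / (12 * (1/4 + (6.29073:ℝ) ^ 2) ^ 2)
      = -983082098322500000000/475768182960111387510723 := by norm_num
  linarith [hterm, hexp_term_b, hlog2pi_hi, h1]

theorem G_increasing_and_sign_change :
    StrictMonoOn G (Set.Ici (6:ℝ)) ∧ G 6.29072 < 0 ∧ 0 < G 6.29073 := by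
  refine ⟨?_, G_neg_a, G_pos_b⟩
  apply strictMonoOn_of_deriv_pos (convex_Ici 6)
  · intro t ht
    have h0 : (0:ℝ) < t := by simp only [Set.mem_Ici] at ht; linarith
    exact (G_hasDeriv h0).continuousAt.continuousWithinAt
  · intro t ht
    rw [interior_Ici, Set.mem_Ioi] at ht
    have h0 : (0:ℝ) < t := by linarith
    rw [(G_hasDeriv h0).deriv]
    have hu : (0:ℝ) < 1/4 + t^2 := by positivity
    have h1 : 0 < t * (6*(1/4+t^2)^2 + 2*(1/4+t^2) + 1) / (6*(1/4+t^2)^3) := by positivity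
    have harc1 : Real.pi/4 < Real.arctan (2*t) := by
      have h := Real.arctan_strictMono (show (1:ℝ) < 2*t by linarith)
      rwa [Real.arctan_one] at h
    have hrr : 2*t/(4*t^2+1) ≤ 1/12 := by
      rw [div_le_iff₀ (by positivity)]; nlinarith
    have h16 : 16*t^3/(4*t^2+1)^2 ≤ 1/6 := by
      rw [div_le_iff₀ (by positivity)]; nlinarith
    have hπ := Real.pi_gt_three
    have hf : 0 < 3*(Real.arctan (2*t) - 2*t/(4*t^2+1)) - 16*t^3/(4*t^2+1)^2 := by nlinarith
    have h2 : 0 < Real.sqrt 3 * (3*(Real.arctan (2*t) - 2*t/(4*t^2+1)) - 16*t^3/(4*t^2+1)^2) / (72*t^4) :=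
      div_pos (mul_pos (Real.sqrt_pos.mpr (by norm_num)) hf) (by positivity)
    have h3 : 0 < 2*Real.pi^2*Real.exp (-Real.pi*t) := by positivity
    linarith
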